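/- Let d ≥ 2 and n ≥ 1 be integers, r ∈ (0,1), and let F : ℝ^d → ℝ^d be a bijection that is Lipschitz with constant L_F and whose inverse F^{−1} is Lipschitz with constant L_{F^{−1}} (Euclidean norm). Then ∫_{F(K)} ‖H^r(F^{−1}(y)) − F^{−1}(y)‖₂² dy ≤ L_F^d · (2r−1)² · d · n^{−2}, where K = [0,1]^d, F(K) is the image of K under F, and the integral is with respect to Lebesgue measure. -/

import Mathlib

open MeasureTheory
open scoped ENNReal NNReal

/-- `h` is affine on the interval `[a, b]`. -/
def AffineOn (h : ℝ → ℝ) (a b : ℝ) : Prop :=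
  ∃ m c : ℝ, ∀ x ∈ Set.Icc a b, h x = m * x + c

/-- `h` is the continuous piecewise-linear function `h^r` from the paper. -/
def IsHr (n : ℕ) (r : ℝ) (h : ℝ → ℝ) : Prop :=
  Continuous h ∧
  (∀ x : ℝ, x ∉ Set.Icc (0:ℝ) 1 → h x = x) ∧
  (∀ j : ℕ, j ≤ n → h ((j : ℝ) / n) = (j : ℝ) / n) ∧
  (∀ j : ℕ, j < n → h (((j : ℝ) + r) / n) = ((j : ℝ) + 1 - r) / n) ∧
  (∀ j : ℕ, j < n → AffineOn h ((j : ℝ) / n) (((j : ℝ) + r) / n)) ∧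
  (∀ j : ℕ, j < n → AffineOn h (((j : ℝ) + r) / n) (((j : ℝ) + 1) / n))

/-- The coordinatewise map `H^r : ℝ^d → ℝ^d`. -/
noncomputable def Hmap (d : ℕ) (h : ℝ → ℝ) (x : EuclideanSpace ℝ (Fin d)) :
    EuclideanSpace ℝ (Fin d) :=
  WithLp.toLp 2 (fun i => h (x i))

/-- The unit cube `K = [0,1]^d`. -/
def unitCube (d : ℕ) : Set (EuclideanSpace ℝ (Fin d)) :=
  {x | ∀ i, x i ∈ Set.Icc (0:ℝ) 1}

/-! On each cell `[j/n, (j+1)/n]` the function `h^r - id` is affine on the two pieces, vanishes at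
the nodes and equals `(1 - 2r)/n` at `(j+r)/n`, so `|h^r t - t| ≤ |2r - 1|/n` on `[0,1]`. Hence
`‖H^r x - x‖² ≤ d (2r-1)²/n²` on `K`. Since `F⁻¹` maps `F(K)` back into `K`, the integrand is
bounded by this constant on `F(K)`, whose volume is at most `L_F^d` because a Lipschitz map
scales the `d`-dimensional Hausdorff measure, and hence Lebesgue measure, by at most `L_F^d`. -/

theorem AffineOn.abs_sub_le_max {h : ℝ → ℝ} {a b x : ℝ} (haff : AffineOn h a b)
    (hx : x ∈ Set.Icc a b) : |h x - x| ≤ max |h a - a| |h b - b| := by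
  obtain ⟨m, c, hmc⟩ := haff
  have hab : a ≤ b := hx.1.trans hx.2
  rw [hmc x hx, hmc a ⟨le_rfl, hab⟩, hmc b ⟨hab, le_rfl⟩]
  have hlin (t : ℝ) : m * t + c - t = (m - 1) * t + c := by ring
  simp only [hlin]
  rcases le_total 0 (m - 1) with hm | hm
  · exact abs_le_max_abs_abs (by nlinarith [hx.1]) (by nlinarith [hx.2])
  · rw [max_comm]
    exact abs_le_max_abs_abs (by nlinarith [hx.2]) (by nlinarith [hx.1])

theorem exists_lt_mem_Icc_div {n : ℕ} (hn : 1 ≤ n) {x : ℝ} (hx : x ∈ Set.Icc (0 : ℝ) 1) :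
    ∃ j < n, (j : ℝ) / n ≤ x ∧ x ≤ ((j : ℝ) + 1) / n := by
  have hn0 : (0 : ℝ) < n := by exact_mod_cast hn
  refine ⟨min ⌊x * n⌋₊ (n - 1), by omega, ?_, ?_⟩
  · rw [div_le_iff₀ hn0]
    exact (Nat.cast_le.2 (min_le_left _ _)).trans (Nat.floor_le (by have := hx.1; positivity))
  · rw [le_div_iff₀ hn0]
    rcases min_choice ⌊x * n⌋₊ (n - 1) with hj | hj <;> rw [hj]
    · exact (Nat.lt_floor_add_one _).le
    · rw [Nat.cast_sub hn, Nat.cast_one, sub_add_cancel]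
      nlinarith [hx.2]

theorem IsHr.abs_sub_le {n : ℕ} (hn : 1 ≤ n) {r : ℝ} {h : ℝ → ℝ} (hh : IsHr n r h) {x : ℝ}
    (hx : x ∈ Set.Icc (0 : ℝ) 1) : |h x - x| ≤ |2 * r - 1| / n := by
  obtain ⟨-, -, hnode, hmid, haff₁, haff₂⟩ := hh
  obtain ⟨j, hjn, hxl, hxr⟩ := exists_lt_mem_Icc_div hn hx
  have hleft : |h ((j : ℝ) / n) - (j : ℝ) / n| = 0 := by rw [hnode j hjn.le, sub_self, abs_zero]
  have hright : |h (((j : ℝ) + 1) / n) - ((j : ℝ) + 1) / n| = 0 := by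
    have := hnode (j + 1) hjn
    push_cast at this
    rw [this, sub_self, abs_zero]
  have hmiddle : |h (((j : ℝ) + r) / n) - ((j : ℝ) + r) / n| = |2 * r - 1| / n := by
    rw [hmid j hjn, div_sub_div_same, abs_div, Nat.abs_cast, ← abs_neg]
    ring_nf
  rcases le_total x (((j : ℝ) + r) / n) with hc | hc
  · have := (haff₁ j hjn).abs_sub_le_max ⟨hxl, hc⟩
    rwa [hleft, hmiddle, max_eq_right (by positivity)] at this
  · have := (haff₂ j hjn).abs_sub_le_max ⟨hc, hxr⟩
    rwa [hright, hmiddle, max_eq_left (by positivity)] at this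

theorem norm_Hmap_sub_sq_le {d : ℕ} {h : ℝ → ℝ} {x : EuclideanSpace ℝ (Fin d)} {c : ℝ}
    (hc : ∀ i, |h (x i) - x i| ≤ c) : ‖Hmap d h x - x‖ ^ 2 ≤ d * c ^ 2 := by
  rw [EuclideanSpace.norm_sq_eq]
  calc ∑ i, ‖(Hmap d h x - x) i‖ ^ 2 ≤ ∑ _i : Fin d, c ^ 2 :=
        Finset.sum_le_sum fun i _ => by
          rw [Real.norm_eq_abs, sq_abs]
          exact sq_le_sq' (abs_le.1 (hc i)).1 (abs_le.1 (hc i)).2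
    _ = d * c ^ 2 := by simp

theorem volume_unitCube (d : ℕ) : volume (unitCube d) = 1 := by
  have hcube : unitCube d = WithLp.ofLp ⁻¹' Set.univ.pi fun _ : Fin d => Set.Icc (0 : ℝ) 1 := by
    ext x
    simp only [unitCube, Set.mem_ofPred_eq, Set.mem_preimage, Set.mem_univ_pi]
  rw [hcube, (PiLp.volume_preserving_ofLp (Fin d)).measure_preimage
    (MeasurableSet.univ_pi fun _ => measurableSet_Icc).nullMeasurableSet, volume_pi_pi]
  simp

theorem LipschitzWith.addHaar_image_le {E : Type*} [NormedAddCommGroup E] [NormedSpace ℝ E]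
    [FiniteDimensional ℝ E] [MeasurableSpace E] [BorelSpace E] (μ : Measure E)
    [μ.IsAddHaarMeasure] {K : ℝ≥0} {f : E → E} (hf : LipschitzWith K f) (s : Set E) :
    μ (f '' s) ≤ (K : ℝ≥0∞) ^ Module.finrank ℝ E * μ s := by
  -- Any additive Haar measure is a constant multiple of the top-dimensional Hausdorff measure.
  have hμ : μ = μ.addHaarScalarFactor μH[Module.finrank ℝ E] • μH[Module.finrank ℝ E] :=
    Measure.isAddLeftInvariant_eq_smul _ _
  have hH := hf.hausdorffMeasure_image_le (Nat.cast_nonneg (Module.finrank ℝ E)) s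
  rw [ENNReal.rpow_natCast] at hH
  rw [hμ, Measure.smul_apply, Measure.smul_apply, ENNReal.smul_def, ENNReal.smul_def,
    smul_eq_mul, smul_eq_mul, mul_left_comm]
  gcongr

theorem inverse_Hr_error (d n : ℕ) (hn : 1 ≤ n) (r : ℝ)
    (h : ℝ → ℝ) (hh : IsHr n r h)
    (F Finv : EuclideanSpace ℝ (Fin d) → EuclideanSpace ℝ (Fin d)) (LF : ℝ≥0)
    (hF : LipschitzWith LF F)
    (hleft : Function.LeftInverse Finv F) :
    ∫ y in F '' unitCube d, ‖Hmap d h (Finv y) - Finv y‖ ^ 2 ≤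
      (LF : ℝ) ^ d * (2 * r - 1) ^ 2 * d / (n : ℝ) ^ 2 := by
  set C : ℝ := d * (|2 * r - 1| / n) ^ 2 with hC
  have hvol : volume (F '' unitCube d) ≤ (LF : ℝ≥0∞) ^ d := by
    simpa [volume_unitCube] using hF.addHaar_image_le volume (unitCube d)
  have hpointwise : ∀ y ∈ F '' unitCube d, ‖‖Hmap d h (Finv y) - Finv y‖ ^ 2‖ ≤ C := by
    rintro _ ⟨x, hx, rfl⟩
    rw [hleft x, norm_pow, norm_norm]
    exact norm_Hmap_sub_sq_le fun i => hh.abs_sub_le hn (hx i)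
  have hvol_real : volume.real (F '' unitCube d) ≤ (LF : ℝ) ^ d := by
    simpa [measureReal_def] using ENNReal.toReal_mono (by simp) hvol
  calc ∫ y in F '' unitCube d, ‖Hmap d h (Finv y) - Finv y‖ ^ 2
      ≤ C * volume.real (F '' unitCube d) :=
        (le_abs_self _).trans (norm_setIntegral_le_of_norm_le_const
          (hvol.trans_lt (by simp)) hpointwise)
    _ ≤ C * (LF : ℝ) ^ d := by gcongr
    _ = (LF : ℝ) ^ d * (2 * r - 1) ^ 2 * d / (n : ℝ) ^ 2 := by
        rw [hC, div_pow, sq_abs]; ring
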